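/- arXiv:2012.11813 — 5 statements merged into one kernel-verified Lean document; each statement's English description precedes it below -/
import Mathlib

section
/- Suppose (f_n)_{n≥1} is a sequence of sequences of nonnegative integers (coefficient sequences of polynomials) satisfying, for n ≥ 4, the shifted recurrence a_{n,0} = 0 and a_{n,j} = a_{n-1,j-1} + a_{n-2,j-1} + a_{n-3,j-1} for j ≥ 1 (i.e., f_n = x(f_{n-1}+f_{n-2}+f_{n-3})). If for n = 1,2,3,4 each f_n is unimodal with mode m_n and 0 ≤ m_n − m_{n-1} ≤ 1 for n = 2,3,4, then for every n ≥ 1, f_n is unimodal with mode m_n satisfying 0 ≤ m_n − m_{n-1} ≤ 1 for n ≥ 2. -/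
/-!
Write `g_n = f_n + f_{n-1} + f_{n-2}`, so that `f_{n+1}` is `g_n` shifted by one place. Since the
modes satisfy `m_{n-3} ≤ m_{n-2} ≤ m_{n-1} ≤ m_n`, all three summands of `g_n` rise below `m_{n-2}`
and fall from `m_n`. For `m_{n-2} ≤ j < m_n - 1` the recurrence
`f_n(j + 1) = f_{n-1}(j) + f_{n-2}(j) + f_{n-3}(j)` writes the increment of `g_n` at `j` as the
increments of `f_n` at `j` and `j + 1` minus that of `f_{n-3}` at `j`, which is past its mode.
So `g_n` rises below `m_n - 1` and falls from `m_n`, and its shift `f_{n+1}` has mode `m_n` or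
`m_n + 1`.
-/

def UnimodalWithMode (a : ℕ → ℕ) (m : ℕ) : Prop :=
  (∀ j, j < m → a j ≤ a (j + 1)) ∧ (∀ j, m ≤ j → a (j + 1) ≤ a j)

def UnimodalBetween (a : ℕ → ℕ) (p q : ℕ) : Prop :=
  (∀ j, j < p → a j ≤ a (j + 1)) ∧ (∀ j, q ≤ j → a (j + 1) ≤ a j)

theorem UnimodalWithMode.unimodalBetween {a : ℕ → ℕ} {m : ℕ} (h : UnimodalWithMode a m) :
    UnimodalBetween a m m :=
  h

namespace UnimodalBetween

variable {a b : ℕ → ℕ} {p q : ℕ}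

theorem mono {p' q' : ℕ} (h : UnimodalBetween a p q) (hp : p' ≤ p) (hq : q ≤ q') :
    UnimodalBetween a p' q' :=
  ⟨fun j hj => h.1 j (by omega), fun j hj => h.2 j (by omega)⟩

theorem add (ha : UnimodalBetween a p q) (hb : UnimodalBetween b p q) :
    UnimodalBetween (a + b) p q :=
  ⟨fun j hj => add_le_add (ha.1 j hj) (hb.1 j hj),
    fun j hj => add_le_add (ha.2 j hj) (hb.2 j hj)⟩

theorem shift (hb : UnimodalBetween b p q) (ha0 : a 0 = 0) (hab : ∀ j, a (j + 1) = b j) :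
    UnimodalBetween a (p + 1) (q + 1) := by
  refine ⟨fun j hj => ?_, fun j hj => ?_⟩
  · cases j with
    | zero => simp [ha0]
    | succ i => simpa only [hab] using hb.1 i (by omega)
  · obtain ⟨i, rfl⟩ : ∃ i, j = i + 1 := ⟨j - 1, by omega⟩
    simpa only [hab] using hb.2 i (by omega)

theorem unimodalWithMode_or (h : UnimodalBetween a p (p + 1)) :
    UnimodalWithMode a p ∨ UnimodalWithMode a (p + 1) := by
  by_cases hp : a (p + 1) ≤ a p
  · exact Or.inl ⟨h.1, fun j hj => (Nat.eq_or_lt_of_le hj).elim (· ▸ hp) (h.2 j)⟩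
  · refine Or.inr ⟨fun j hj => (Nat.lt_succ_iff_lt_or_eq.mp hj).elim (h.1 j) ?_, h.2⟩
    rintro rfl
    exact (not_le.mp hp).le

end UnimodalBetween

theorem unimodalBetween_add_add_of_succ_eq {a b c d : ℕ → ℕ} {q₀ q₁ q₂ q₃ : ℕ}
    (ha : UnimodalWithMode a q₀) (hb : UnimodalWithMode b q₁) (hc : UnimodalWithMode c q₂)
    (hd : UnimodalWithMode d q₃) (h₃₂ : q₃ ≤ q₂) (h₂₁ : q₂ ≤ q₁) (h₁₀ : q₁ ≤ q₀)
    (hrec : ∀ j, a (j + 1) = b j + c j + d j) :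
    UnimodalBetween (a + b + c) (q₀ - 1) q₀ := by
  have houter : UnimodalBetween (a + b + c) q₂ q₀ :=
    ((ha.unimodalBetween.mono (h₂₁.trans h₁₀) le_rfl).add (hb.unimodalBetween.mono h₂₁ h₁₀)).add
      (hc.unimodalBetween.mono le_rfl (h₂₁.trans h₁₀))
  refine ⟨fun j hj => ?_, houter.2⟩
  by_cases hj₂ : j < q₂
  · exact houter.1 j hj₂
  · have ha₁ := ha.1 j (by omega)
    have ha₂ := ha.1 (j + 1) (by omega)
    have hd₁ := hd.2 j (by omega)
    have hr₁ := hrec j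
    have hr₂ := hrec (j + 1)
    simp only [Pi.add_apply]
    omega

section extendModes

open Classical

noncomputable def extendModes (f : ℕ → ℕ → ℕ) (m : ℕ → ℕ) : ℕ → ℕ
  | 0 => m 0
  | n + 1 =>
    if n + 1 ≤ 4 then m (n + 1)
    else if UnimodalWithMode (f (n + 1)) (extendModes f m n) then extendModes f m n
    else extendModes f m n + 1

variable {f : ℕ → ℕ → ℕ} {m : ℕ → ℕ}

theorem extendModes_of_le_four {n : ℕ} (hn : n ≤ 4) : extendModes f m n = m n := by
  cases n <;> simp [extendModes, hn]

theorem extendModes_succ_of_four_le {n : ℕ} (hn : 4 ≤ n) :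
    extendModes f m (n + 1) =
      if UnimodalWithMode (f (n + 1)) (extendModes f m n) then extendModes f m n
      else extendModes f m n + 1 := by
  rw [extendModes, if_neg (by omega)]

theorem extendModes_pred_le (hdiff : ∀ n, 2 ≤ n → n ≤ 4 → m (n - 1) ≤ m n ∧ m n ≤ m (n - 1) + 1)
    {n : ℕ} (hn : 2 ≤ n) :
    extendModes f m (n - 1) ≤ extendModes f m n ∧
      extendModes f m n ≤ extendModes f m (n - 1) + 1 := by
  by_cases h4 : n ≤ 4
  · rw [extendModes_of_le_four h4, extendModes_of_le_four (by omega)]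
    exact hdiff n hn h4
  · obtain ⟨k, rfl⟩ : ∃ k, n = k + 1 := ⟨n - 1, by omega⟩
    rw [extendModes_succ_of_four_le (by omega), Nat.add_sub_cancel]
    split_ifs <;> omega

theorem unimodalWithMode_extendModes_succ {n : ℕ} (hn : 4 ≤ n)
    (h : UnimodalWithMode (f (n + 1)) (extendModes f m n) ∨
      UnimodalWithMode (f (n + 1)) (extendModes f m n + 1)) :
    UnimodalWithMode (f (n + 1)) (extendModes f m (n + 1)) := by
  rw [extendModes_succ_of_four_le hn]
  split_ifs with hM
  · exact hM
  · exact h.resolve_left hM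

theorem unimodalWithMode_extendModes
    (hrec : ∀ n, 4 ≤ n → f n 0 = 0 ∧
      ∀ j, 1 ≤ j → f n j = f (n - 1) (j - 1) + f (n - 2) (j - 1) + f (n - 3) (j - 1))
    (hbase : ∀ n, 1 ≤ n → n ≤ 4 → UnimodalWithMode (f n) (m n))
    (hdiff : ∀ n, 2 ≤ n → n ≤ 4 → m (n - 1) ≤ m n ∧ m n ≤ m (n - 1) + 1) {n : ℕ} (hn : 1 ≤ n) :
    UnimodalWithMode (f n) (extendModes f m n) := by
  induction n using Nat.strong_induction_on with
  | _ n ih =>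
    by_cases h4 : n ≤ 4
    · rw [extendModes_of_le_four h4]
      exact hbase n hn h4
    obtain ⟨k, rfl⟩ : ∃ k, n = k + 4 := ⟨n - 4, by omega⟩
    have hu : ∀ i ≤ 3, UnimodalWithMode (f (k + i)) (extendModes f m (k + i)) :=
      fun i hi => ih (k + i) (by omega) (by omega)
    have hc : ∀ i < 3, extendModes f m (k + i) ≤ extendModes f m (k + i + 1) := fun i hi => by
      simpa using (extendModes_pred_le (f := f) hdiff (n := k + i + 1) (by omega)).1
    have hsucc : ∀ j, f (k + 3) (j + 1) = f (k + 2) j + f (k + 1) j + f k j := fun j => by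
      simpa using (hrec (k + 3) (by omega)).2 (j + 1) (by omega)
    have hnext : ∀ j, f (k + 4) (j + 1) = (f (k + 3) + f (k + 2) + f (k + 1)) j := fun j => by
      simpa using (hrec (k + 4) (by omega)).2 (j + 1) (by omega)
    have hg := unimodalBetween_add_add_of_succ_eq (hu 3 le_rfl) (hu 2 (by omega))
      (hu 1 (by omega)) (hu 0 (by omega)) (hc 0 (by omega)) (hc 1 (by omega))
      (hc 2 (by omega)) hsucc
    exact unimodalWithMode_extendModes_succ (n := k + 3) (by omega)
      ((hg.shift (hrec (k + 4) (by omega)).1 hnext).mono le_tsub_add le_rfl).unimodalWithMode_or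

end extendModes

/-- For a sequence of coefficient sequences satisfying `f_n = x(f_{n-1}+f_{n-2}+f_{n-3})`
for `n ≥ 4`, if `f_1,…,f_4` are unimodal with modes whose consecutive differences lie in
`{0,1}`, then every `f_n` (`n ≥ 1`) is unimodal with modes satisfying the same
difference condition. -/
theorem stmt_2 (f : ℕ → ℕ → ℕ)
    (hrec : ∀ n, 4 ≤ n → f n 0 = 0 ∧
      ∀ j, 1 ≤ j → f n j = f (n - 1) (j - 1) + f (n - 2) (j - 1) + f (n - 3) (j - 1))
    (m : ℕ → ℕ)
    (hbase : ∀ n, 1 ≤ n → n ≤ 4 → UnimodalWithMode (f n) (m n))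
    (hdiff : ∀ n, 2 ≤ n → n ≤ 4 → m (n - 1) ≤ m n ∧ m n ≤ m (n - 1) + 1) :
    ∃ M : ℕ → ℕ, (∀ n, 1 ≤ n → n ≤ 4 → M n = m n) ∧
      ∀ n, 1 ≤ n → UnimodalWithMode (f n) (M n) ∧
        (2 ≤ n → M (n - 1) ≤ M n ∧ M n ≤ M (n - 1) + 1) :=
  ⟨extendModes f m, fun _ _ h4 => extendModes_of_le_four h4,
    fun _ hn => ⟨unimodalWithMode_extendModes hrec hbase hdiff hn,
      fun h2 => extendModes_pred_le hdiff h2⟩⟩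
end

section
/- For every n ≥ 3, the domination polynomial of the path P_n is unimodal. -/
/-- The number of dominating sets of cardinality `i` in `G`. -/
noncomputable def domCount {V : Type*} (G : SimpleGraph V) (i : ℕ) : ℕ :=
  Nat.card {s : Finset V // s.card = i ∧ ∀ v, v ∈ s ∨ ∃ u ∈ s, G.Adj u v}

/-!
Grouping a dominating set of a path by the gaps between consecutive chosen vertices (inner gaps
of 0, 1 or 2 vertices, end gaps of 0 or 1) gives `d(P_{n+1}, j+1) = [x^(n-j)] (1+x)²(1+x+x²)^j`,
which can also be read off from a transfer recursion on the status of the last vertex.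
The coefficient row `c_j` of `(1+x)²(1+x+x²)^j` is a Pólya frequency sequence of order 2
(log-concave without internal zeros), a property preserved by multiplication with `1 + x` and
`1 + x + x²`. With `t = n - j`, the descent `d(P_{n+1}, j+2) ≤ d(P_{n+1}, j+1)` reads
`c_j(t-1) + c_j(t-2) + c_j(t-3) ≤ c_j(t)`. Log-concavity moves this inequality one step to the
left, and the sum of three shifted copies of it is the descent at the next index. So once the
sequence decreases it keeps decreasing, and it is unimodal.
-/

theorem exists_unimodal_of_descent_persists (f : ℕ → ℕ) (a : ℕ) (hzero : ∀ i < a, f i = 0)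
    (hpersist : ∀ i, a ≤ i → f (i + 1) ≤ f i → f (i + 1 + 1) ≤ f (i + 1))
    (hdesc : ∃ i, f (i + 1) < f i) :
    ∃ k, (∀ i, i < k → f i ≤ f (i + 1)) ∧ (∀ i, k ≤ i → f (i + 1) ≤ f i) := by
  classical
  refine ⟨Nat.find hdesc, fun i hi => not_lt.1 (Nat.find_min hdesc hi), fun i hi => ?_⟩
  have hk := Nat.find_spec hdesc
  have hak : a ≤ Nat.find hdesc := by
    by_contra h
    have := hzero _ (not_le.1 h)
    omega
  induction i, hi using Nat.le_induction with
  | base => exact hk.le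
  | succ i hki ih => exact hpersist i (hak.trans hki) ih

namespace PathDomination

open Finset

/- A function `ℤ → ℕ` stands for the coefficient sequence of a Laurent polynomial;
`mulOneAddX` and `mulTrinomial` multiply it by `1 + x` and by `1 + x + x²`. -/
def mulOneAddX (g : ℤ → ℕ) (t : ℤ) : ℕ := g t + g (t - 1)

def mulTrinomial (g : ℤ → ℕ) (t : ℤ) : ℕ := g t + g (t - 1) + g (t - 2)

lemma mulTrinomial_mulOneAddX (g : ℤ → ℕ) :
    mulTrinomial (mulOneAddX g) = mulOneAddX (mulTrinomial g) := by
  funext t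
  simp only [mulTrinomial, mulOneAddX]
  ring_nf

lemma support_mulOneAddX {g : ℤ → ℕ} {L : ℤ} (hL : 0 ≤ L) (hg : g.support = Set.Icc 0 L) :
    (mulOneAddX g).support = Set.Icc 0 (L + 1) := by
  ext t
  have h : ∀ s, g s ≠ 0 ↔ 0 ≤ s ∧ s ≤ L := fun s => by
    rw [← Function.mem_support, hg, Set.mem_Icc]
  simp only [Function.mem_support, Set.mem_Icc, mulOneAddX]
  have := h t
  have := h (t - 1)
  omega

lemma support_mulTrinomial {g : ℤ → ℕ} {L : ℤ} (hL : 0 ≤ L) (hg : g.support = Set.Icc 0 L) :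
    (mulTrinomial g).support = Set.Icc 0 (L + 2) := by
  ext t
  have h : ∀ s, g s ≠ 0 ↔ 0 ≤ s ∧ s ≤ L := fun s => by
    rw [← Function.mem_support, hg, Set.mem_Icc]
  simp only [Function.mem_support, Set.mem_Icc, mulTrinomial]
  have := h t
  have := h (t - 1)
  have := h (t - 2)
  omega

/-- Pólya frequency of order 2: equivalently, log-concave without internal zeros. -/
def IsPF2 (g : ℤ → ℕ) : Prop := ∀ p q, p ≤ q → g (p - 1) * g (q + 1) ≤ g p * g q

section IsPF2

variable {g : ℤ → ℕ}

lemma IsPF2.mul_le_mul_of_add_eq (hg : IsPF2 g) {a b c d : ℤ} (hab : a ≤ b) (hac : a ≤ c)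
    (h : a + d = b + c) : g a * g d ≤ g b * g c := by
  wlog hbc : b ≤ c generalizing b c
  · rw [mul_comm (g b)]
    exact this hac hab (by omega) (by omega)
  obtain ⟨k, rfl⟩ : ∃ k : ℕ, a = b - k := ⟨(b - a).toNat, by omega⟩
  obtain rfl : d = c + k := by omega
  clear hab hac h
  induction k generalizing b c with
  | zero => simp
  | succ k ih =>
    calc g (b - ↑(k + 1)) * g (c + ↑(k + 1)) = g (b - 1 - k) * g (c + 1 + k) := by
          push_cast; ring_nf
      _ ≤ g (b - 1) * g (c + 1) := ih (by omega)
      _ ≤ g b * g c := hg b c hbc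

lemma isPF2_mulOneAddX (hg : IsPF2 g) : IsPF2 (mulOneAddX g) := by
  intro p q hpq
  have h₁ := hg p q hpq
  have h₂ : g (p - 2) * g (q + 1) ≤ g p * g (q - 1) :=
    hg.mul_le_mul_of_add_eq (by omega) (by omega) (by ring)
  have h₃ : g (p - 2) * g q ≤ g (p - 1) * g (q - 1) :=
    hg.mul_le_mul_of_add_eq (by omega) (by omega) (by ring)
  simp only [mulOneAddX, show p - 1 - 1 = p - 2 by ring, add_sub_cancel_right]
  linarith

lemma isPF2_mulTrinomial (hg : IsPF2 g) : IsPF2 (mulTrinomial g) := by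
  intro p q hpq
  have h₁ := hg p q hpq
  have h₂ : g (p - 2) * g (q + 1) ≤ g p * g (q - 1) :=
    hg.mul_le_mul_of_add_eq (by omega) (by omega) (by ring)
  have h₃ : g (p - 3) * g (q + 1) ≤ g p * g (q - 2) :=
    hg.mul_le_mul_of_add_eq (by omega) (by omega) (by ring)
  have h₄ : g (p - 3) * g q ≤ g (p - 1) * g (q - 2) :=
    hg.mul_le_mul_of_add_eq (by omega) (by omega) (by ring)
  have h₅ : g (p - 3) * g (q - 1) ≤ g (p - 2) * g (q - 2) :=
    hg.mul_le_mul_of_add_eq (by omega) (by omega) (by ring)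
  simp only [mulTrinomial, show p - 1 - 1 = p - 2 by ring, show p - 1 - 2 = p - 3 by ring,
    add_sub_cancel_right, show q + 1 - 2 = q - 1 by ring]
  linarith

lemma IsPF2.mulTrinomial_sub_two_le (hg : IsPF2 g) {t : ℤ} (ht : 0 < g t)
    (h : mulTrinomial g (t - 1) ≤ g t) : mulTrinomial g (t - 2) ≤ g (t - 1) := by
  simp only [mulTrinomial, show t - 1 - 1 = t - 2 by ring, show t - 1 - 2 = t - 3 by ring,
    show t - 2 - 1 = t - 3 by ring, show t - 2 - 2 = t - 4 by ring] at h ⊢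
  have s₁ : g (t - 2) * g t ≤ g (t - 1) * g (t - 1) :=
    hg.mul_le_mul_of_add_eq (by omega) (by omega) (by ring)
  have s₂ : g (t - 3) * g t ≤ g (t - 2) * g (t - 1) :=
    hg.mul_le_mul_of_add_eq (by omega) (by omega) (by ring)
  have s₃ : g (t - 4) * g t ≤ g (t - 3) * g (t - 1) :=
    hg.mul_le_mul_of_add_eq (by omega) (by omega) (by ring)
  have h' := Nat.mul_le_mul_left (g (t - 1)) h
  refine le_of_mul_le_mul_left ?_ ht
  linarith

lemma IsPF2.mulTrinomial_mulTrinomial_le (hg : IsPF2 g) {L t : ℤ}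
    (hsupp : g.support = Set.Icc 0 L) (ht : t ≤ L) (h : mulTrinomial g (t - 1) ≤ g t) :
    mulTrinomial (mulTrinomial g) (t - 2) ≤ mulTrinomial g (t - 1) := by
  have hmem : ∀ s, g s ≠ 0 ↔ 0 ≤ s ∧ s ≤ L := fun s => by
    rw [← Function.mem_support, hsupp, Set.mem_Icc]
  have step : ∀ s ≤ L, mulTrinomial g (s - 1) ≤ g s →
      mulTrinomial g (s - 1 - 1) ≤ g (s - 1) := by
    intro s hs hs'
    rcases le_or_gt 0 s with h0 | h0
    · rw [sub_sub]
      exact hg.mulTrinomial_sub_two_le (Nat.pos_of_ne_zero ((hmem s).2 ⟨h0, hs⟩)) hs'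
    · have hz : ∀ r < 0, g r = 0 := fun r hr =>
        by_contra fun hne => by have := (hmem r).1 hne; omega
      simp only [mulTrinomial, hz _ (show s - 1 - 1 < 0 by omega),
        hz _ (show s - 1 - 1 - 1 < 0 by omega), hz _ (show s - 1 - 1 - 2 < 0 by omega)]
      omega
  have h₁ := step t ht h
  have h₂ := step (t - 1) (by omega) h₁
  have h₃ := step (t - 1 - 1) (by omega) h₂
  simp only [mulTrinomial] at h₁ h₂ h₃ ⊢
  ring_nf at h₁ h₂ h₃ ⊢
  omega

end IsPF2

def rowCoeff (m : ℕ) : ℤ → ℕ := mulTrinomial^[m] (mulOneAddX (Pi.single 0 1))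

def pathCoeff (m : ℕ) : ℤ → ℕ := mulOneAddX (rowCoeff m)

lemma rowCoeff_succ (m : ℕ) : rowCoeff (m + 1) = mulTrinomial (rowCoeff m) :=
  Function.iterate_succ_apply' _ _ _

lemma pathCoeff_succ (m : ℕ) : pathCoeff (m + 1) = mulTrinomial (pathCoeff m) := by
  rw [pathCoeff, pathCoeff, rowCoeff_succ, mulTrinomial_mulOneAddX]

lemma support_rowCoeff (m : ℕ) : (rowCoeff m).support = Set.Icc 0 (2 * (m : ℤ) + 1) := by
  induction m with
  | zero =>
    rw [rowCoeff, Function.iterate_zero, id,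
      support_mulOneAddX le_rfl (by rw [Pi.support_single_of_ne one_ne_zero, Set.Icc_self])]
    norm_num
  | succ m ih =>
    rw [rowCoeff_succ, support_mulTrinomial (by omega) ih]
    push_cast
    ring_nf

lemma rowCoeff_of_neg {m : ℕ} {t : ℤ} (ht : t < 0) : rowCoeff m t = 0 :=
  Function.notMem_support.1 fun h => by
    rw [support_rowCoeff] at h
    exact absurd h.1 (not_le.2 ht)

lemma support_pathCoeff (m : ℕ) : (pathCoeff m).support = Set.Icc 0 (2 * (m : ℤ) + 2) := by
  rw [pathCoeff, support_mulOneAddX (by omega) (support_rowCoeff m)]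
  ring_nf

lemma pathCoeff_pos_iff {m : ℕ} {t : ℤ} : 0 < pathCoeff m t ↔ 0 ≤ t ∧ t ≤ 2 * m + 2 := by
  rw [Nat.pos_iff_ne_zero, ← Function.mem_support, support_pathCoeff, Set.mem_Icc]

lemma isPF2_pathCoeff (m : ℕ) : IsPF2 (pathCoeff m) := by
  have hδ : IsPF2 (Pi.single 0 1) := by
    intro p q hpq
    simp only [Pi.single_apply]
    split_ifs <;> omega
  induction m with
  | zero => exact isPF2_mulOneAddX (isPF2_mulOneAddX hδ)
  | succ m ih => rw [pathCoeff_succ]; exact isPF2_mulTrinomial ih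

open scoped Classical

def PathDominated (s : Finset ℕ) (v : ℕ) : Prop := v ∈ s ∨ ∃ u ∈ s, u + 1 = v ∨ v + 1 = u

def DominatesBelow (s : Finset ℕ) (n : ℕ) : Prop := ∀ v < n, PathDominated s v

lemma dominatesBelow_succ {s : Finset ℕ} {n : ℕ} :
    DominatesBelow s (n + 1) ↔ DominatesBelow s n ∧ PathDominated s n := by
  simp only [DominatesBelow, Nat.lt_succ_iff_lt_or_eq, or_imp, forall_and, forall_eq]

lemma pathDominated_succ_iff {s : Finset ℕ} {n : ℕ} (hs : s ⊆ range (n + 1)) :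
    PathDominated s (n + 1) ↔ n ∈ s := by
  have hlt := fun u (hu : u ∈ s) => mem_range.1 (hs hu)
  constructor
  · rintro (h | ⟨u, hu, h | h⟩)
    · have := hlt _ h; omega
    · obtain rfl : u = n := by omega
      exact hu
    · have := hlt _ hu; omega
  · exact fun h => Or.inr ⟨n, h, Or.inl rfl⟩

lemma pathDominated_insert_of_lt {s : Finset ℕ} {u v : ℕ} (h : v + 1 < u) :
    PathDominated (insert u s) v ↔ PathDominated s v := by
  have h₁ : v ≠ u := by omega
  have h₂ : ¬ (u + 1 = v ∨ v + 1 = u) := by omega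
  simp only [PathDominated, mem_insert, exists_eq_or_imp, h₁, h₂, false_or]

noncomputable def countSubsets (n j : ℕ) (P : Finset ℕ → Prop) : ℕ :=
  #{s ∈ (range n).powersetCard j | P s}

lemma countSubsets_congr {n j : ℕ} {P Q : Finset ℕ → Prop} (h : ∀ s ⊆ range n, P s ↔ Q s) :
    countSubsets n j P = countSubsets n j Q := by
  unfold countSubsets
  congr 1
  exact filter_congr fun s hs => h s (mem_powersetCard.1 hs).1

lemma countSubsets_zero_right (n : ℕ) (P : Finset ℕ → Prop) :
    countSubsets n 0 P = if P ∅ then 1 else 0 := by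
  rw [countSubsets, powersetCard_zero, filter_singleton]
  split_ifs <;> rfl

lemma countSubsets_zero_succ (j : ℕ) (P : Finset ℕ → Prop) : countSubsets 0 (j + 1) P = 0 := by
  simp [countSubsets]

lemma countSubsets_add (n j : ℕ) (P Q : Finset ℕ → Prop) :
    countSubsets n j P =
      countSubsets n j (fun s => P s ∧ Q s) + countSubsets n j (fun s => P s ∧ ¬ Q s) := by
  simp only [countSubsets, ← filter_filter, card_filter_add_card_filter_not]

lemma countSubsets_succ_of_notMem {n j : ℕ} {P : Finset ℕ → Prop} (hP : ∀ s, P s → n ∉ s) :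
    countSubsets (n + 1) j P = countSubsets n j P := by
  unfold countSubsets
  congr 1
  ext s
  simp only [mem_filter, mem_powersetCard, subset_iff, mem_range]
  constructor
  · rintro ⟨⟨hs, hcard⟩, hPs⟩
    exact ⟨⟨fun x hx => lt_of_le_of_ne (Nat.lt_succ_iff.1 (hs hx))
      (by rintro rfl; exact hP s hPs hx), hcard⟩, hPs⟩
  · rintro ⟨⟨hs, hcard⟩, hPs⟩
    exact ⟨⟨fun x hx => Nat.lt_succ_of_lt (hs hx), hcard⟩, hPs⟩

lemma countSubsets_succ_succ_mem (n j : ℕ) (P : Finset ℕ → Prop) :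
    countSubsets (n + 1) (j + 1) (fun s => P s ∧ n ∈ s) =
      countSubsets n j (fun s => P (insert n s)) := by
  unfold countSubsets
  refine card_nbij' (fun s => s.erase n) (insert n) ?_ ?_ ?_ ?_
  · intro s hs
    simp only [mem_coe, mem_filter, mem_powersetCard, subset_iff, mem_range] at hs ⊢
    obtain ⟨⟨hsub, hcard⟩, hP, hn⟩ := hs
    refine ⟨⟨fun x hx => ?_, by rw [card_erase_of_mem hn, hcard]; rfl⟩, by rwa [insert_erase hn]⟩
    obtain ⟨hxn, hx⟩ := mem_erase.1 hx
    exact lt_of_le_of_ne (Nat.lt_succ_iff.1 (hsub hx)) hxn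
  · intro s hs
    simp only [mem_coe, mem_filter, mem_powersetCard, subset_iff, mem_range] at hs ⊢
    obtain ⟨⟨hsub, hcard⟩, hP⟩ := hs
    have hn : n ∉ s := fun h => (hsub h).false
    refine ⟨⟨fun x hx => ?_, by rw [card_insert_of_notMem hn, hcard]⟩, hP, mem_insert_self _ _⟩
    rcases mem_insert.1 hx with rfl | hx
    · exact Nat.lt_succ_self _
    · exact Nat.lt_succ_of_lt (hsub hx)
  · intro s hs
    simp only [mem_coe, mem_filter] at hs
    exact insert_erase hs.2.2
  · intro s hs
    simp only [mem_coe, mem_filter, mem_powersetCard] at hs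
    exact erase_insert fun h => (mem_range.1 (hs.1.1 h)).false

/- Transfer states for the subsets of `{0, …, n}`, according to the status of the last vertex. -/
noncomputable def numLastIn (n j : ℕ) : ℕ :=
  countSubsets (n + 1) j (fun s => DominatesBelow s (n + 1) ∧ n ∈ s)

noncomputable def numLastOut (n j : ℕ) : ℕ :=
  countSubsets (n + 1) j (fun s => DominatesBelow s (n + 1) ∧ n ∉ s)

noncomputable def numLastUndominated (n j : ℕ) : ℕ :=
  countSubsets (n + 1) j (fun s => DominatesBelow s n ∧ ¬ PathDominated s n)

lemma countSubsets_dominatesBelow (n j : ℕ) :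
    countSubsets (n + 1) j (DominatesBelow · (n + 1)) = numLastIn n j + numLastOut n j :=
  countSubsets_add _ _ _ _

lemma numLastIn_succ_succ (n j : ℕ) :
    numLastIn (n + 1) (j + 1) = numLastIn n j + numLastOut n j + numLastUndominated n j := by
  rw [numLastIn, countSubsets_succ_succ_mem]
  have hinsert : ∀ s : Finset ℕ,
      DominatesBelow (insert (n + 1) s) (n + 1 + 1) ↔ DominatesBelow s n := by
    intro s
    have hlast : PathDominated (insert (n + 1) s) n :=
      Or.inr ⟨n + 1, mem_insert_self _ _, by omega⟩
    have hnew : PathDominated (insert (n + 1) s) (n + 1) := Or.inl (mem_insert_self _ _)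
    simp only [dominatesBelow_succ, hlast, hnew, and_true]
    exact forall₂_congr fun v hv => pathDominated_insert_of_lt (by omega)
  rw [countSubsets_congr fun s _ => hinsert s, countSubsets_add _ _ _ (PathDominated · n),
    ← countSubsets_dominatesBelow]
  congr 1
  exact countSubsets_congr fun s _ => dominatesBelow_succ.symm

lemma numLastOut_succ (n j : ℕ) : numLastOut (n + 1) j = numLastIn n j := by
  rw [numLastOut, countSubsets_succ_of_notMem fun s h => h.2]
  refine countSubsets_congr fun s hs => ?_
  have hn : n + 1 ∉ s := fun h => (mem_range.1 (hs h)).false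
  rw [dominatesBelow_succ, pathDominated_succ_iff hs]
  exact ⟨fun h => h.1, fun h => ⟨h, hn⟩⟩

lemma numLastUndominated_succ (n j : ℕ) : numLastUndominated (n + 1) j = numLastOut n j := by
  rw [numLastUndominated, countSubsets_succ_of_notMem fun s h hn => h.2 (Or.inl hn)]
  exact countSubsets_congr fun s hs => by rw [pathDominated_succ_iff hs]

lemma numLastIn_zero (n : ℕ) : numLastIn n 0 = 0 := by
  simp [numLastIn, countSubsets_zero_right]

lemma numLastOut_zero (n : ℕ) : numLastOut n 0 = 0 := by
  rw [numLastOut, countSubsets_zero_right, if_neg]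
  exact fun h => by simpa [PathDominated] using h.1 0 n.succ_pos

lemma numLastUndominated_zero (n : ℕ) : numLastUndominated n 0 = if n = 0 then 1 else 0 := by
  simp only [numLastUndominated, countSubsets_zero_right, DominatesBelow, PathDominated,
    notMem_empty, false_or, false_and, exists_false, not_false_eq_true, and_true]
  congr 1
  exact propext ⟨fun h => Nat.le_zero.1 (not_lt.1 (h 0)),
    by rintro rfl v hv; exact absurd hv v.not_lt_zero⟩

theorem numLast_eq_rowCoeff (n j : ℕ) :
    numLastIn n (j + 1) = rowCoeff j (n - j) ∧ numLastOut n (j + 1) = rowCoeff j (n - j - 1) ∧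
      numLastUndominated n (j + 1) = rowCoeff j (n - j - 2) := by
  induction n generalizing j with
  | zero =>
    simp only [CharP.cast_eq_zero, zero_sub, rowCoeff_of_neg (show -(j : ℤ) - 1 < 0 by omega),
      rowCoeff_of_neg (show -(j : ℤ) - 2 < 0 by omega)]
    refine ⟨?_, ?_, ?_⟩
    · rw [numLastIn, countSubsets_succ_succ_mem]
      cases j with
      | zero => simp [countSubsets_zero_right, rowCoeff, mulOneAddX, DominatesBelow, PathDominated]
      | succ j => rw [countSubsets_zero_succ, rowCoeff_of_neg (by omega)]
    · rw [numLastOut, countSubsets_succ_of_notMem fun s h => h.2, countSubsets_zero_succ]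
    · rw [numLastUndominated, countSubsets_succ_of_notMem fun s h hn => h.2 (Or.inl hn),
        countSubsets_zero_succ]
  | succ n ih =>
    refine ⟨?_, ?_, ?_⟩
    · rw [numLastIn_succ_succ]
      cases j with
      | zero =>
        rw [numLastIn_zero, numLastOut_zero, numLastUndominated_zero]
        simp only [rowCoeff, Function.iterate_zero, id_eq, mulOneAddX, Pi.single_apply]
        push_cast
        split_ifs <;> omega
      | succ j =>
        obtain ⟨hin, hout, hund⟩ := ih j
        rw [hin, hout, hund, rowCoeff_succ,
          show ((n + 1 : ℕ) : ℤ) - (j + 1 : ℕ) = n - j by push_cast; ring]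
        rfl
    · rw [numLastOut_succ, (ih j).1]
      congr 1
      push_cast
      ring
    · rw [numLastUndominated_succ, (ih j).2.1]
      congr 1
      push_cast
      ring

lemma dominates_iff_dominatesBelow_map {n : ℕ} (s : Finset (Fin n)) :
    (∀ v, v ∈ s ∨ ∃ u ∈ s, (SimpleGraph.pathGraph n).Adj u v) ↔
      DominatesBelow (s.map Fin.valEmbedding) n := by
  simp only [DominatesBelow, PathDominated, SimpleGraph.pathGraph_adj, mem_map,
    Fin.valEmbedding_apply, Fin.forall_iff, exists_exists_and_eq_and]
  refine forall₂_congr fun v hv => or_congr ⟨fun h => ⟨_, h, rfl⟩, ?_⟩ Iff.rfl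
  rintro ⟨w, hw, rfl⟩
  exact hw

lemma domCount_pathGraph (n j : ℕ) :
    domCount (SimpleGraph.pathGraph n) j = countSubsets n j (DominatesBelow · n) := by
  rw [domCount, Nat.card_eq_fintype_card, Fintype.card_subtype, countSubsets, ← Nat.Iio_eq_range,
    ← Fin.map_valEmbedding_univ, powersetCard_map, filter_map, card_map]
  congr 1
  ext s
  simp [dominates_iff_dominatesBelow_map]

lemma domCount_pathGraph_succ_zero (n : ℕ) : domCount (SimpleGraph.pathGraph (n + 1)) 0 = 0 := by
  rw [domCount_pathGraph, countSubsets_dominatesBelow, numLastIn_zero, numLastOut_zero]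

lemma domCount_pathGraph_succ_succ (n j : ℕ) :
    domCount (SimpleGraph.pathGraph (n + 1)) (j + 1) = pathCoeff j (n - j) := by
  rw [domCount_pathGraph, countSubsets_dominatesBelow, (numLast_eq_rowCoeff n j).1,
    (numLast_eq_rowCoeff n j).2.1]
  rfl

lemma domCount_pathGraph_descent_persists (n i : ℕ) (hi : n + 1 ≤ 3 * i)
    (h : domCount (SimpleGraph.pathGraph (n + 1)) (i + 1) ≤
      domCount (SimpleGraph.pathGraph (n + 1)) i) :
    domCount (SimpleGraph.pathGraph (n + 1)) (i + 1 + 1) ≤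
      domCount (SimpleGraph.pathGraph (n + 1)) (i + 1) := by
  obtain ⟨j, rfl⟩ : ∃ j, i = j + 1 := ⟨i - 1, by omega⟩
  simp only [domCount_pathGraph_succ_succ, pathCoeff_succ] at h ⊢
  rw [show (n : ℤ) - (j + 1 : ℕ) = n - j - 1 by push_cast; ring] at h ⊢
  rw [show (n : ℤ) - (j + 1 + 1 : ℕ) = n - j - 2 by push_cast; ring]
  exact (isPF2_pathCoeff j).mulTrinomial_mulTrinomial_le (support_pathCoeff j) (by omega) h

end PathDomination

open PathDomination in
theorem stmt_3_general (n : ℕ) :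
    ∃ k, (∀ i, i < k → domCount (SimpleGraph.pathGraph n) i ≤
            domCount (SimpleGraph.pathGraph n) (i + 1)) ∧
      (∀ i, k ≤ i → domCount (SimpleGraph.pathGraph n) (i + 1) ≤
            domCount (SimpleGraph.pathGraph n) i) := by
  rcases n with _ | n
  · refine ⟨0, by simp, fun i _ => ?_⟩
    rw [domCount_pathGraph, countSubsets_zero_succ]
    exact Nat.zero_le _
  -- `(n + 3) / 3 = ⌈(n + 1) / 3⌉` is the domination number of `P_(n+1)`.
  refine exists_unimodal_of_descent_persists _ ((n + 3) / 3) ?_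
    (fun i hi => domCount_pathGraph_descent_persists n i (by omega)) ⟨n + 1, ?_⟩
  · rintro (_ | j) hj
    · exact domCount_pathGraph_succ_zero n
    · rw [domCount_pathGraph_succ_succ, ← Nat.le_zero, ← not_lt, pathCoeff_pos_iff]
      omega
  · have hlast : 0 < pathCoeff n 0 := pathCoeff_pos_iff.2 (by omega)
    have hbeyond : pathCoeff (n + 1) (n - (n + 1 : ℕ)) = 0 := by
      rw [← Nat.le_zero, ← not_lt, pathCoeff_pos_iff]
      omega
    rwa [domCount_pathGraph_succ_succ, domCount_pathGraph_succ_succ, sub_self, hbeyond]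

/-- For every `n ≥ 3`, the domination polynomial of the path `P_n` is unimodal. -/
theorem stmt_3 (n : ℕ) (hn : 3 ≤ n) :
    ∃ k, (∀ i, i < k → domCount (SimpleGraph.pathGraph n) i ≤
            domCount (SimpleGraph.pathGraph n) (i + 1)) ∧
      (∀ i, k ≤ i → domCount (SimpleGraph.pathGraph n) (i + 1) ≤
            domCount (SimpleGraph.pathGraph n) i) :=
  stmt_3_general n
end

section
/- The domination polynomial of every complete multipartite graph K_{n_1,...,n_k} is unimodal. -/
/-!
Dominating sets of any graph form an upper set, so the upward local LYM inequality makes `d_i`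
non-decreasing while `2 i < N`, where `N` is the number of vertices. In `K_{n_1,…,n_k}` a set
fails to dominate exactly when it lies properly inside one part. Hence, for `2 j > N`, every
dominating `(j+1)`-set other than a whole part stays dominating after removing any of its vertices
but at most one, and double counting the pairs `S ⊂ T` of dominating sets of sizes `j` and `j + 1`
makes `d_j` non-increasing from there on. With at most one part the graph has no edges and `univ`
is the only dominating set.
-/

open Finset

def IsUnimodal (a : ℕ → ℕ) : Prop :=
  ∃ m, (∀ i, i < m → a i ≤ a (i + 1)) ∧ (∀ i, m ≤ i → a (i + 1) ≤ a i)

theorem IsUnimodal.of_le_succ_of_succ_le {a : ℕ → ℕ} (h : ℕ)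
    (hinc : ∀ i, i < h → a i ≤ a (i + 1)) (hdec : ∀ i, h < i → a (i + 1) ≤ a i) :
    IsUnimodal a := by
  rcases le_total (a (h + 1)) (a h) with hh | hh
  · exact ⟨h, hinc, fun i hi => hi.eq_or_lt.elim (fun e => e ▸ hh) (hdec i)⟩
  · refine ⟨h + 1, fun i hi => ?_, fun i hi => hdec i (by omega)⟩
    exact (Nat.lt_succ_iff_lt_or_eq.1 hi).elim (hinc i) fun e => e ▸ hh

namespace Finset

variable {α : Type*} [DecidableEq α]

theorem card_bipartiteBelow_subset_le {𝒜 : Finset (Finset α)} {r : ℕ}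
    (h𝒜 : (𝒜 : Set (Finset α)).Sized r) {t : Finset α} (ht : #t = r + 1) :
    #(𝒜.bipartiteBelow (· ⊆ ·) t) ≤ r + 1 := by
  calc #(𝒜.bipartiteBelow (· ⊆ ·) t)
      ≤ #(t.powersetCard r) := card_le_card fun s hs => by
        rw [mem_bipartiteBelow] at hs
        exact mem_powersetCard.2 ⟨hs.2, h𝒜 hs.1⟩
    _ = r + 1 := by rw [card_powersetCard, ht, Nat.choose_succ_self_right]

variable [Fintype α]

theorem card_bipartiteAbove_subset_le {ℬ : Finset (Finset α)} {r : ℕ}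
    (hℬ : (ℬ : Set (Finset α)).Sized (r + 1)) {s : Finset α} (hs : #s = r) :
    #(ℬ.bipartiteAbove (· ⊆ ·) s) ≤ Fintype.card α - r := by
  rw [← hs, ← card_compl]
  refine (card_le_card fun t ht => ?_).trans (card_image_le (f := (insert · s)))
  rw [mem_bipartiteAbove] at ht
  obtain ⟨a, ha, rfl⟩ := exists_eq_insert_iff.2 ⟨ht.2, by rw [hℬ ht.1, hs]⟩
  exact mem_image_of_mem _ (mem_compl.2 ha)

theorem _root_.IsUpperSet.le_card_bipartiteAbove_slice {𝒜 : Finset (Finset α)}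
    (h𝒜 : IsUpperSet (𝒜 : Set (Finset α))) {s : Finset α} {r : ℕ} (hs : s ∈ 𝒜 # r) :
    Fintype.card α - r ≤ #((𝒜 # (r + 1)).bipartiteAbove (· ⊆ ·) s) := by
  obtain ⟨hs𝒜, rfl⟩ := mem_slice.1 hs
  rw [← card_compl, ← card_image_of_injOn (insert_inj_on' s)]
  refine card_le_card fun t ht => ?_
  obtain ⟨a, ha, rfl⟩ := mem_image.1 ht
  rw [mem_bipartiteAbove, mem_slice]
  exact ⟨⟨h𝒜 (subset_insert a s) hs𝒜, card_insert_of_notMem (mem_compl.1 ha)⟩,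
    subset_insert a s⟩

/-- The upward local LYM inequality for an upper set, whose upper shadow stays inside it. -/
theorem _root_.IsUpperSet.card_slice_mul_le {𝒜 : Finset (Finset α)}
    (h𝒜 : IsUpperSet (𝒜 : Set (Finset α))) (r : ℕ) :
    #(𝒜 # r) * (Fintype.card α - r) ≤ #(𝒜 # (r + 1)) * (r + 1) :=
  card_mul_le_card_mul (· ⊆ ·) (fun _ hs => h𝒜.le_card_bipartiteAbove_slice hs)
    (fun _ ht => card_bipartiteBelow_subset_le sized_slice (mem_slice.1 ht).2)

theorem _root_.IsUpperSet.card_slice_le_card_slice_succ {𝒜 : Finset (Finset α)}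
    (h𝒜 : IsUpperSet (𝒜 : Set (Finset α))) {r : ℕ} (hr : 2 * r < Fintype.card α) :
    #(𝒜 # r) ≤ #(𝒜 # (r + 1)) :=
  Nat.le_of_mul_le_mul_right
    ((h𝒜.card_slice_mul_le r).trans (Nat.mul_le_mul_left _ (by omega))) (by omega)

end Finset

namespace SimpleGraph

variable {V : Type*} (G : SimpleGraph V)

def IsDominating (s : Finset V) : Prop :=
  ∀ v, v ∈ s ∨ ∃ u ∈ s, G.Adj u v

variable {G}

theorem IsDominating.mono {s t : Finset V} (hs : G.IsDominating s) (hst : s ⊆ t) :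
    G.IsDominating t := fun v =>
  (hs v).imp (@hst v) fun ⟨u, hu, huv⟩ => ⟨u, hst hu, huv⟩

theorem eq_univ_of_isDominating_bot [Fintype V] {s : Finset V}
    (hs : (⊥ : SimpleGraph V).IsDominating s) : s = univ :=
  eq_univ_of_forall fun v => (hs v).resolve_right fun ⟨_, _, h⟩ => h

variable [Fintype V]

variable (G) in
open Classical in
noncomputable def dominatingSets : Finset (Finset V) := {s | G.IsDominating s}

theorem mem_dominatingSets {s : Finset V} : s ∈ G.dominatingSets ↔ G.IsDominating s := by
  classical
  simp [dominatingSets]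

theorem isUpperSet_dominatingSets : IsUpperSet (G.dominatingSets : Set (Finset V)) :=
  fun _ _ hst hs => mem_dominatingSets.2 ((mem_dominatingSets.1 hs).mono hst)

theorem domCount_eq_card_slice (i : ℕ) : domCount G i = #(G.dominatingSets # i) := by
  classical
  rw [domCount, Nat.card_eq_fintype_card, Fintype.card_subtype]
  congr 1
  ext s
  simp [mem_slice, mem_dominatingSets, IsDominating, and_comm]

theorem domCount_eq_zero_of_card_lt {i : ℕ} (hi : Fintype.card V < i) : domCount G i = 0 := by
  rw [domCount_eq_card_slice, card_eq_zero, eq_empty_iff_forall_notMem]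
  exact fun s hs => (card_le_univ s).not_gt ((mem_slice.1 hs).2 ▸ hi)

theorem domCount_bot_eq_zero_of_lt {i : ℕ} (hi : i < Fintype.card V) :
    domCount (⊥ : SimpleGraph V) i = 0 := by
  rw [domCount_eq_card_slice, card_eq_zero, eq_empty_iff_forall_notMem]
  intro s hs
  obtain ⟨hsD, rfl⟩ := mem_slice.1 hs
  have huniv : s = univ := eq_univ_of_isDominating_bot (mem_dominatingSets.1 hsD)
  exact (huniv ▸ card_univ (α := V) ▸ hi).false

theorem domCount_pos {s : Finset V} (hs : G.IsDominating s) {i : ℕ} (hsi : #s ≤ i)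
    (hi : i ≤ Fintype.card V) : 0 < domCount G i := by
  obtain ⟨t, hst, rfl⟩ := exists_superset_card_eq hsi hi
  rw [domCount_eq_card_slice, card_pos]
  exact ⟨t, mem_slice.2 ⟨mem_dominatingSets.2 (hs.mono hst), rfl⟩⟩

theorem domCount_le_domCount_succ {i : ℕ} (hi : 2 * i < Fintype.card V) :
    domCount G i ≤ domCount G (i + 1) := by
  classical
  simpa only [domCount_eq_card_slice] using
    isUpperSet_dominatingSets.card_slice_le_card_slice_succ hi

end SimpleGraph

namespace SimpleGraph.completeMultipartiteGraph

variable {ι : Type*} {α : ι → Type*}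

def IsPart (s : Finset (Σ i, α i)) : Prop :=
  ∃ i, ∀ v, v ∈ s ↔ v.1 = i

theorem eq_bot [Subsingleton ι] : completeMultipartiteGraph α = ⊥ := by
  ext u v
  simp [Subsingleton.elim u.1 v.1]

theorem not_isDominating_iff {s : Finset (Σ i, α i)} :
    ¬ (completeMultipartiteGraph α).IsDominating s ↔ ∃ v ∉ s, ∀ u ∈ s, u.1 = v.1 := by
  simp only [IsDominating, comap_adj, top_adj, not_forall, not_or, not_exists, not_and, not_not]

theorem isDominating_pair [DecidableEq (Σ i, α i)] {u v : Σ i, α i} (huv : u.1 ≠ v.1) :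
    (completeMultipartiteGraph α).IsDominating {u, v} := by
  intro w
  by_cases hw : w.1 = u.1
  · exact Or.inr ⟨v, by simp, fun e => huv (hw ▸ e).symm⟩
  · exact Or.inr ⟨u, by simp, fun e => hw e.symm⟩

/-- Each removal leaves a set inside a single part, and a third vertex forces the two parts to
agree. -/
theorem isPart_of_not_isDominating_erase [DecidableEq (Σ i, α i)] {s : Finset (Σ i, α i)}
    (hs : (completeMultipartiteGraph α).IsDominating s) (h3 : 3 ≤ #s) {v w : Σ i, α i}
    (hv : v ∈ s) (hw : w ∈ s) (hvw : v ≠ w)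
    (hv' : ¬ (completeMultipartiteGraph α).IsDominating (s.erase v))
    (hw' : ¬ (completeMultipartiteGraph α).IsDominating (s.erase w)) : IsPart s := by
  obtain ⟨a, -, ha⟩ := not_isDominating_iff.1 hv'
  obtain ⟨b, -, hb⟩ := not_isDominating_iff.1 hw'
  obtain ⟨x, hx⟩ : ((s.erase v).erase w).Nonempty := by
    rw [← card_pos, card_erase_of_mem (mem_erase.2 ⟨hvw.symm, hw⟩), card_erase_of_mem hv]
    omega
  obtain ⟨hxw, hxv, hxs⟩ : x ≠ w ∧ x ≠ v ∧ x ∈ s := by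
    simpa only [mem_erase] using hx
  have hsub : ∀ y ∈ s, y.1 = a.1 := by
    intro y hy
    by_cases hyv : y = v
    · rw [hyv, hb v (mem_erase.2 ⟨hvw, hv⟩), ← hb x (mem_erase.2 ⟨hxw, hxs⟩)]
      exact ha x (mem_erase.2 ⟨hxv, hxs⟩)
    · exact ha y (mem_erase.2 ⟨hyv, hy⟩)
  refine ⟨a.1, fun y => ⟨hsub y, fun hy => by_contra fun hys => ?_⟩⟩
  obtain ⟨u, hu, huy⟩ := (hs y).resolve_left hys
  exact huy ((hsub u hu).trans hy.symm)

open Classical in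
theorem card_sub_one_le_card_filter_isDominating_erase [DecidableEq (Σ i, α i)]
    {s : Finset (Σ i, α i)} (hs : (completeMultipartiteGraph α).IsDominating s) (h3 : 3 ≤ #s)
    (hs' : ¬ IsPart s) :
    #s - 1 ≤ #{v ∈ s | (completeMultipartiteGraph α).IsDominating (s.erase v)} := by
  have hbad : #{v ∈ s | ¬ (completeMultipartiteGraph α).IsDominating (s.erase v)} ≤ 1 :=
    card_le_one.2 fun _ hv _ hw => by_contra fun hvw =>
      hs' <| isPart_of_not_isDominating_erase hs h3 (mem_filter.1 hv).1 (mem_filter.1 hw).1 hvw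
        (mem_filter.1 hv).2 (mem_filter.1 hw).2
  have := card_filter_add_card_filter_not (s := s)
    fun v => (completeMultipartiteGraph α).IsDominating (s.erase v)
  omega

theorem IsPart.eq_of_card_eq [Fintype (Σ i, α i)] {s t : Finset (Σ i, α i)} (hs : IsPart s)
    (ht : IsPart t) (hst : #s = #t) (hN : Fintype.card (Σ i, α i) < 2 * #s) : s = t := by
  classical
  obtain ⟨i, hi⟩ := hs
  obtain ⟨i', hi'⟩ := ht
  by_cases hii' : i = i'
  · ext v
    rw [hi, hi', hii']
  · have hdisj : Disjoint s t :=
      Finset.disjoint_left.2 fun v hvs hvt => hii' (((hi v).1 hvs).symm.trans ((hi' v).1 hvt))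
    have := card_le_univ (s ∪ t)
    rw [card_union_of_disjoint hdisj] at this
    omega

variable [Fintype ι] [∀ i, Fintype (α i)]

theorem le_card_bipartiteBelow_erase [DecidableEq (Σ i, α i)] {T : Finset (Σ i, α i)} {j : ℕ}
    (hT : T ∈ (completeMultipartiteGraph α).dominatingSets) (hTj : #T = j + 1) (hj : 2 ≤ j)
    (hT' : ¬ IsPart T) :
    j ≤ #(((completeMultipartiteGraph α).dominatingSets # j).bipartiteBelow (· ⊆ ·) T) := by
  classical
  have hgood := card_sub_one_le_card_filter_isDominating_erase (mem_dominatingSets.1 hT)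
    (by omega) hT'
  rw [hTj, Nat.add_sub_cancel] at hgood
  rw [← card_image_of_injOn (T.erase_injOn.mono (filter_subset _ T))] at hgood
  refine hgood.trans (card_le_card fun S hS => ?_)
  obtain ⟨v, hv, rfl⟩ := mem_image.1 hS
  obtain ⟨hvT, hvD⟩ := mem_filter.1 hv
  rw [mem_bipartiteBelow, mem_slice, mem_dominatingSets, card_erase_of_mem hvT, hTj]
  exact ⟨⟨hvD, rfl⟩, erase_subset v T⟩

/-- Double counting pairs `S ⊂ T` of dominating sets of sizes `j` and `j + 1`: every `T` that is
not a part has at least `j` such `S`, every `S` at most `N - j < j` such `T`, and when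
`N < 2 * j` at most one part has `j + 1` elements. -/
theorem domCount_succ_le_domCount_of_pos {j : ℕ} (hj : 2 ≤ j)
    (hN : Fintype.card (Σ i, α i) < 2 * j)
    (hpos : 0 < domCount (completeMultipartiteGraph α) j) :
    domCount (completeMultipartiteGraph α) (j + 1) ≤ domCount (completeMultipartiteGraph α) j := by
  classical
  simp only [domCount_eq_card_slice] at hpos ⊢
  set 𝒟 := (completeMultipartiteGraph α).dominatingSets
  set ℰ := {T ∈ 𝒟 # (j + 1) | ¬ IsPart T}
  have hparts : #{T ∈ 𝒟 # (j + 1) | IsPart T} ≤ 1 := by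
    refine card_le_one.2 fun S hS T hT => ?_
    obtain ⟨hSj, hS⟩ := mem_filter.1 hS
    obtain ⟨hTj, hT⟩ := mem_filter.1 hT
    rw [mem_slice] at hSj hTj
    exact hS.eq_of_card_eq hT (hSj.2.trans hTj.2.symm) (by omega)
  have hsplit : #{T ∈ 𝒟 # (j + 1) | IsPart T} + #ℰ = #(𝒟 # (j + 1)) :=
    card_filter_add_card_filter_not _
  have hcount : #ℰ * j ≤ #(𝒟 # j) * (Fintype.card (Σ i, α i) - j) := by
    refine card_mul_le_card_mul' (· ⊆ ·) (fun T hT => ?_) (fun S hS => ?_)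
    · obtain ⟨hTj, hT'⟩ := mem_filter.1 hT
      exact le_card_bipartiteBelow_erase (mem_slice.1 hTj).1 (mem_slice.1 hTj).2 hj hT'
    · exact card_bipartiteAbove_subset_le (sized_slice.mono (filter_subset _ _))
        (mem_slice.1 hS).2
  by_contra! hlt
  have : #(𝒟 # j) * j ≤ #(𝒟 # j) * (j - 1) :=
    calc _ ≤ #ℰ * j := Nat.mul_le_mul_right j (by omega)
      _ ≤ _ := hcount.trans (Nat.mul_le_mul_left _ (by omega))
  have := Nat.le_of_mul_le_mul_left this hpos
  omega

theorem domCount_succ_le_domCount {u v : Σ i, α i} (huv : u.1 ≠ v.1) {j : ℕ}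
    (hj : Fintype.card (Σ i, α i) / 2 < j) :
    domCount (completeMultipartiteGraph α) (j + 1) ≤ domCount (completeMultipartiteGraph α) j := by
  classical
  have hpair : #{u, v} = 2 := card_pair fun e => huv (congrArg Sigma.fst e)
  have h2 : 2 ≤ Fintype.card (Σ i, α i) := hpair ▸ card_le_univ _
  rcases le_or_gt j (Fintype.card (Σ i, α i)) with hjN | hjN
  · exact domCount_succ_le_domCount_of_pos (by omega) (by omega)
      (domCount_pos (isDominating_pair huv) (by omega) hjN)
  · rw [domCount_eq_zero_of_card_lt (hjN.trans j.lt_succ_self)]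
    exact Nat.zero_le _

end SimpleGraph.completeMultipartiteGraph

open SimpleGraph completeMultipartiteGraph

/-- The domination polynomial of every complete multipartite graph `K_{n_1,…,n_k}`
is unimodal. -/
theorem stmt_7 (k : ℕ) (n : Fin k → ℕ) (hn : ∀ i, 1 ≤ n i) :
    ∃ m, (∀ i, i < m →
        domCount (SimpleGraph.completeMultipartiteGraph fun i => Fin (n i)) i ≤
          domCount (SimpleGraph.completeMultipartiteGraph fun i => Fin (n i)) (i + 1)) ∧
      (∀ i, m ≤ i →
        domCount (SimpleGraph.completeMultipartiteGraph fun i => Fin (n i)) (i + 1) ≤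
          domCount (SimpleGraph.completeMultipartiteGraph fun i => Fin (n i)) i) := by
  set N := Fintype.card (Σ i, Fin (n i))
  rcases le_or_gt k 1 with hk | hk
  · have : Subsingleton (Fin k) := Fin.subsingleton_iff_le_one.2 hk
    refine IsUnimodal.of_le_succ_of_succ_le N (fun i hi => ?_) (fun i hi => ?_)
    · rw [eq_bot, domCount_bot_eq_zero_of_lt hi]
      exact Nat.zero_le _
    · rw [domCount_eq_zero_of_card_lt (by omega : N < i + 1)]
      exact Nat.zero_le _
  · let u : Σ i, Fin (n i) := ⟨⟨0, by omega⟩, ⟨0, hn _⟩⟩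
    let v : Σ i, Fin (n i) := ⟨⟨1, hk⟩, ⟨0, hn _⟩⟩
    have huv : u.1 ≠ v.1 := by simp [u, v]
    exact IsUnimodal.of_le_succ_of_succ_le (N / 2)
      (fun i hi => domCount_le_domCount_succ (by omega))
      (fun i hi => domCount_succ_le_domCount huv hi)
end

section
/- For a graph G on n vertices with minimum degree δ, the proportion of dominating i-subsets satisfies r_i(G) = d_i(G)/C(n,i) ≥ 1 − (n−i)·((n−i)/n)^δ, for 0 ≤ i ≤ n−δ−1. -/
/-!
A non-dominating `i`-set misses the closed neighbourhood of some vertex `v`, which has at least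
`δ + 1` elements, so there are at most `n · C(n - δ - 1, i)` of them. Since
`C(m - 1, i) / C(m, i) = (m - i) / m ≤ (n - i) / n` for `m ≤ n`, removing `δ + 1` elements
from the ground set shrinks `C(n, i)` by at least the factor `((n - i) / n) ^ (δ + 1)`.
-/

open Finset

theorem Nat.mul_sub_le_sub_mul {n m i : ℕ} (h : m ≤ n) : n * (m - i) ≤ (n - i) * m := by
  rcases le_total i m with him | hmi
  · zify [him, him.trans h]; nlinarith
  · simp [Nat.sub_eq_zero_of_le hmi]

theorem Nat.mul_choose_pred_le {n m i : ℕ} (h : m ≤ n) :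
    n * (m - 1).choose i ≤ (n - i) * m.choose i := by
  rcases m with _ | k
  · rcases i with _ | i <;> simp
  · refine Nat.le_of_mul_le_mul_right ?_ (by omega : 0 < k + 1)
    calc n * (k + 1 - 1).choose i * (k + 1) = (k + 1).choose i * (n * (k + 1 - i)) := by
          rw [Nat.add_sub_cancel, mul_assoc, Nat.choose_mul_succ_eq]; ring
      _ ≤ (k + 1).choose i * ((n - i) * (k + 1)) :=
          Nat.mul_le_mul_left _ (Nat.mul_sub_le_sub_mul h)
      _ = _ := by ring

theorem Nat.pow_mul_choose_sub_le (n i k : ℕ) :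
    n ^ k * (n - k).choose i ≤ (n - i) ^ k * n.choose i := by
  induction k with
  | zero => simp
  | succ k ih =>
    calc n ^ (k + 1) * (n - (k + 1)).choose i = n ^ k * (n * (n - k - 1).choose i) := by
          rw [Nat.sub_sub]; ring
      _ ≤ n ^ k * ((n - i) * (n - k).choose i) :=
          Nat.mul_le_mul_left _ (Nat.mul_choose_pred_le (Nat.sub_le n k))
      _ = (n - i) * (n ^ k * (n - k).choose i) := by ring
      _ ≤ (n - i) * ((n - i) ^ k * n.choose i) := Nat.mul_le_mul_left _ ih
      _ = (n - i) ^ (k + 1) * n.choose i := by ring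

theorem Nat.mul_choose_sub_succ_div_choose_le {n i : ℕ} (hin : i ≤ n) (hn : 0 < n) (k : ℕ) :
    (n : ℝ) * (n - (k + 1)).choose i / n.choose i ≤ (n - i) * ((n - i) / n) ^ k := by
  have hC : (0 : ℝ) < n.choose i := by exact_mod_cast Nat.choose_pos hin
  have hnk : (0 : ℝ) < n ^ k := by positivity
  have key : ((n ^ (k + 1) * (n - (k + 1)).choose i : ℕ) : ℝ) ≤
      ((n - i) ^ (k + 1) * n.choose i : ℕ) :=
    Nat.cast_le.2 (Nat.pow_mul_choose_sub_le n i (k + 1))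
  push_cast [Nat.cast_sub hin] at key
  rw [div_le_iff₀ hC, div_pow, mul_div_assoc', div_mul_eq_mul_div, le_div_iff₀ hnk]
  calc (n : ℝ) * (n - (k + 1)).choose i * n ^ k = n ^ (k + 1) * (n - (k + 1)).choose i := by
        ring
    _ ≤ (n - i) ^ (k + 1) * n.choose i := key
    _ = (n - i) * (n - i) ^ k * n.choose i := by ring

namespace SimpleGraph

variable {V : Type*} (G : SimpleGraph V)

variable [Fintype V] [DecidableEq V] [DecidableRel G.Adj]

instance : DecidablePred G.IsDominating := fun s => by unfold IsDominating; infer_instance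

theorem not_isDominating_iff (s : Finset V) :
    ¬ G.IsDominating s ↔ ∃ v, s ⊆ (insert v (G.neighborFinset v))ᶜ := by
  simp only [IsDominating, not_forall, not_or, not_exists, not_and, subset_iff, mem_compl,
    mem_insert, mem_neighborFinset]
  exact exists_congr fun v =>
    ⟨fun ⟨hv, hadj⟩ u hu => ⟨fun h => hv (h ▸ hu), fun h => hadj u hu h.symm⟩,
      fun h => ⟨fun hv => (h hv).1 rfl, fun u hu huv => (h hu).2 huv.symm⟩⟩

theorem domCount_eq_card_filter (i : ℕ) :
    domCount G i = #{s ∈ powersetCard i univ | G.IsDominating s} := by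
  rw [domCount, Nat.card_eq_fintype_card]
  exact Fintype.card_of_subtype _ fun s => by rw [mem_filter]; simp [IsDominating]

theorem card_filter_not_isDominating_le {δ : ℕ} (hδ : ∀ v, δ ≤ G.degree v) (i : ℕ) :
    #{s ∈ powersetCard i univ | ¬ G.IsDominating s} ≤
      Fintype.card V * (Fintype.card V - (δ + 1)).choose i := by
  calc #{s ∈ powersetCard i univ | ¬ G.IsDominating s}
      ≤ #(univ.biUnion fun v => powersetCard i (insert v (G.neighborFinset v))ᶜ) := by
        refine card_le_card fun s hs => ?_
        simp only [mem_filter, mem_powersetCard, not_isDominating_iff] at hs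
        obtain ⟨⟨-, hcard⟩, v, hv⟩ := hs
        exact mem_biUnion.2 ⟨v, mem_univ v, mem_powersetCard.2 ⟨hv, hcard⟩⟩
    _ ≤ ∑ v, (powersetCard i (insert v (G.neighborFinset v))ᶜ).card := card_biUnion_le
    _ ≤ ∑ _v : V, (Fintype.card V - (δ + 1)).choose i := by
        refine sum_le_sum fun v _ => ?_
        rw [card_powersetCard, card_compl, card_insert_of_notMem (by simp),
          card_neighborFinset_eq_degree]
        exact Nat.choose_le_choose i (by have := hδ v; omega)
    _ = Fintype.card V * (Fintype.card V - (δ + 1)).choose i := by simp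

theorem choose_le_domCount_add {δ : ℕ} (hδ : ∀ v, δ ≤ G.degree v) (i : ℕ) :
    (Fintype.card V).choose i ≤
      domCount G i + Fintype.card V * (Fintype.card V - (δ + 1)).choose i := by
  rw [domCount_eq_card_filter, ← card_univ, ← card_powersetCard,
    ← card_filter_add_card_filter_not G.IsDominating, card_univ]
  exact Nat.add_le_add_left (G.card_filter_not_isDominating_le hδ i) _

end SimpleGraph

/-- For a graph `G` on `n` vertices with minimum degree `δ` and `0 ≤ i ≤ n-δ-1`,
the proportion of dominating `i`-subsets satisfies
`r_i(G) ≥ 1 - (n-i)·((n-i)/n)^δ`. -/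
theorem stmt_14 {V : Type*} [Fintype V] (G : SimpleGraph V) [DecidableRel G.Adj]
    (δ : ℕ) (hδ : ∀ v : V, δ ≤ G.degree v) (i : ℕ)
    (hi : i + δ + 1 ≤ Fintype.card V) :
    1 - ((Fintype.card V : ℝ) - i) *
        (((Fintype.card V : ℝ) - i) / Fintype.card V) ^ δ ≤
      (domCount G i : ℝ) / (Fintype.card V).choose i := by
  classical
  set n := Fintype.card V
  have hC : (0 : ℝ) < n.choose i := by exact_mod_cast Nat.choose_pos (by omega : i ≤ n)
  have hcount : (n.choose i : ℝ) ≤ domCount G i + n * (n - (δ + 1)).choose i := by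
    exact_mod_cast G.choose_le_domCount_add hδ i
  have hratio := Nat.mul_choose_sub_succ_div_choose_le (by omega : i ≤ n) (by omega) δ
  calc (1 : ℝ) - (n - i) * ((n - i) / n) ^ δ
        ≤ 1 - n * (n - (δ + 1)).choose i / n.choose i := by linarith
    _ = (n.choose i - n * (n - (δ + 1)).choose i) / n.choose i := by field_simp
    _ ≤ domCount G i / n.choose i := by gcongr; linarith
end

section
/- If a polynomial f with positive coefficients has all real roots, writing avd = f'(1)/f(1), then the coefficient sequence of f is unimodal with mode at ⌊avd⌋ or ⌈avd⌉. -/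
/-!
Write `f = f(1) · ∏ᵢ (pᵢ X + 1 - pᵢ)` with `pᵢ = 1 / (1 - rᵢ) ∈ [0, 1]` over the roots `rᵢ ≤ 0`.
Then `aₖ / f(1)` is the law of a sum of independent Bernoulli(`pᵢ`) variables, with mean
`μ = ∑ pᵢ = f'(1) / f(1)`. Darroch's inequality `aₖ₊₁ ≤ aₖ` for `μ ≤ k` is proved by induction on
the number of factors: maximise `aₖ₊₁ - aₖ` over the compact set of `p ∈ [0,1]^s` with
`∑ pᵢ ≤ k`. If two coordinates of a maximiser differ, they can be pushed apart until one of them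
is `0` or `1`, which removes a factor; otherwise all `pᵢ` are equal and the inequality is a
binomial computation. Replacing `p` by `1 - p` reverses the coefficients and gives `aₖ ≤ aₖ₊₁`
for `k + 1 ≤ μ`; together the two inequalities put the mode at `⌊μ⌋` or `⌈μ⌉`.
-/

open Polynomial Finset

theorem Polynomial.coeff_linear_mul_zero {R : Type*} [CommSemiring R] (a b : R) (q : R[X]) :
    ((C a * X + C b) * q).coeff 0 = b * q.coeff 0 := by
  simp [add_mul, mul_assoc]

theorem Polynomial.coeff_linear_mul_succ {R : Type*} [CommSemiring R] (a b : R) (q : R[X]) (k : ℕ) :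
    ((C a * X + C b) * q).coeff (k + 1) = a * q.coeff k + b * q.coeff (k + 1) := by
  simp [add_mul, mul_assoc, coeff_C_mul]

theorem Polynomial.reflect_one_linear {R : Type*} [CommSemiring R] (a b : R) :
    reflect 1 (C a * X + C b) = C b * X + C a := by
  rw [reflect_add, reflect_C, ← pow_one X, reflect_C_mul_X_pow, revAt_le le_rfl]
  simp [add_comm]

theorem Polynomial.coeff_linear_pow {R : Type*} [CommSemiring R] (a b : R) (n k : ℕ) :
    ((C a * X + C b) ^ n).coeff k = n.choose k * a ^ k * b ^ (n - k) := by
  rw [add_pow, finsetSum_coeff]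
  simp_rw [mul_pow, ← C_pow, ← C_eq_natCast, mul_right_comm _ (X ^ _), ← C_mul,
    coeff_C_mul_X_pow, sum_ite_eq]
  split_ifs with h
  · ring
  · rw [Nat.choose_eq_zero_of_lt (by simpa using h)]; simp

theorem Polynomial.X_sub_C_eq_C_mul_linear {r : ℝ} (hr : r ≠ 1) :
    X - C r = C (1 - r) * (C (1 - r)⁻¹ * X + C (1 - (1 - r)⁻¹)) := by
  have h : 1 - r ≠ 0 := sub_ne_zero.2 hr.symm
  rw [mul_add, ← mul_assoc, ← C_mul, ← C_mul, mul_inv_cancel₀ h, mul_sub, mul_inv_cancel₀ h]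
  simp only [map_sub, map_one, mul_one]
  ring

theorem Polynomial.eval_pos_of_coeff_nonneg {f : ℝ[X]} (hf : ∀ i, 0 ≤ f.coeff i)
    (h0 : 0 < f.coeff 0) {x : ℝ} (hx : 0 ≤ x) : 0 < f.eval x := by
  rw [eval_eq_sum_range]
  exact sum_pos' (fun i _ => mul_nonneg (hf i) (pow_nonneg hx i)) ⟨0, by simp, by simpa using h0⟩

theorem binomial_coeff_succ_le {n k : ℕ} {x : ℝ} (hx : x ∈ Set.Icc 0 1) (hmean : n * x ≤ k) :
    ((C x * X + C (1 - x)) ^ n).coeff (k + 1) ≤ ((C x * X + C (1 - x)) ^ n).coeff k := by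
  obtain ⟨hx0, hx1⟩ := hx
  rw [coeff_linear_pow, coeff_linear_pow]
  rcases lt_or_ge n (k + 1) with hn | hkn
  · rw [Nat.choose_eq_zero_of_lt hn, Nat.cast_zero, zero_mul, zero_mul]
    exact mul_nonneg (mul_nonneg (Nat.cast_nonneg _) (pow_nonneg hx0 _))
      (pow_nonneg (sub_nonneg.2 hx1) _)
  have hchoose : (n.choose (k + 1) : ℝ) * (k + 1) = n.choose k * (n - k) := by
    rw [← Nat.cast_sub (by omega)]; exact_mod_cast Nat.choose_succ_right_eq n k
  have hkey : (n - k : ℝ) * x ≤ (k + 1) * (1 - x) := by nlinarith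
  have hw : 0 ≤ x ^ k * (1 - x) ^ (n - (k + 1)) :=
    mul_nonneg (pow_nonneg hx0 _) (pow_nonneg (sub_nonneg.2 hx1) _)
  rw [show n - k = n - (k + 1) + 1 by omega,
    ← mul_le_mul_iff_of_pos_right (show (0 : ℝ) < k + 1 by positivity)]
  calc _ = (n.choose (k + 1) : ℝ) * (k + 1) * x * (x ^ k * (1 - x) ^ (n - (k + 1))) := by ring
    _ = n.choose k * ((n - k) * x) * (x ^ k * (1 - x) ^ (n - (k + 1))) := by rw [hchoose]; ring
    _ ≤ n.choose k * ((k + 1) * (1 - x)) * (x ^ k * (1 - x) ^ (n - (k + 1))) := by gcongr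
    _ = _ := by ring

theorem exists_add_eq_mul_le {a b : ℝ} (ha : a ∈ Set.Icc 0 1) (hb : b ∈ Set.Icc 0 1) :
    ∃ c d : ℝ, c + d = a + b ∧ c ∈ Set.Icc 0 1 ∧ d ∈ Set.Icc 0 1 ∧ (c = 1 ∨ d = 0) ∧
      c * d ≤ a * b := by
  obtain ⟨ha0, ha1⟩ := ha
  obtain ⟨hb0, hb1⟩ := hb
  rcases le_total (a + b) 1 with h | h
  · exact ⟨a + b, 0, by ring, ⟨by linarith, h⟩, ⟨le_rfl, zero_le_one⟩, Or.inr rfl,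
      by nlinarith⟩
  · exact ⟨1, a + b - 1, by ring, ⟨zero_le_one, le_rfl⟩, ⟨by linarith, by linarith⟩, Or.inl rfl,
      by nlinarith⟩

theorem Finset.sum_update_eq {ι M : Type*} [DecidableEq ι] [AddCommGroup M] {s : Finset ι}
    {i : ι} (hi : i ∈ s) (f : ι → M) (b : M) :
    ∑ x ∈ s, Function.update f i b x = ∑ x ∈ s, f x - f i + b := by
  rw [sum_update_of_mem hi, sdiff_singleton_eq_erase, ← add_sum_erase s f hi]
  abel

namespace PoissonBinomial

variable {ι : Type*}

/-- `(poly p s).coeff k` is the probability that exactly `k` of independent events with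
probabilities `p i`, `i ∈ s`, occur. -/
noncomputable def poly (p : ι → ℝ) (s : Finset ι) : ℝ[X] :=
  ∏ i ∈ s, (C (p i) * X + C (1 - p i))

noncomputable def coeffGap (p : ι → ℝ) (s : Finset ι) (k : ℕ) : ℝ :=
  (poly p s).coeff (k + 1) - (poly p s).coeff k

def meanAtMost (s : Finset ι) (k : ℝ) : Set (ι → ℝ) :=
  Set.Icc 0 1 ∩ {p | ∑ i ∈ s, p i ≤ k}

theorem poly_congr {p q : ι → ℝ} {s : Finset ι} (h : ∀ i ∈ s, p i = q i) :
    poly p s = poly q s :=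
  prod_congr rfl fun i hi => by rw [h i hi]

theorem eval_one_poly (p : ι → ℝ) (s : Finset ι) : (poly p s).eval 1 = 1 := by
  simp [poly, eval_prod]

theorem natDegree_poly_le (p : ι → ℝ) (s : Finset ι) : (poly p s).natDegree ≤ s.card := by
  refine (natDegree_prod_le _ _).trans ?_
  simpa using sum_le_sum fun i _ => natDegree_linear_le (a := p i) (b := 1 - p i)

theorem poly_eq_pow {p : ι → ℝ} {s : Finset ι} {x : ℝ} (h : ∀ i ∈ s, p i = x) :
    poly p s = (C x * X + C (1 - x)) ^ s.card := by
  rw [poly, prod_congr rfl fun i hi => by rw [h i hi], prod_const]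

theorem exists_eq_C_eval_one_mul_poly {f : ℝ[X]} (hf : f.Splits) (hroots : ∀ r ∈ f.roots, r ≤ 0) :
    ∃ (n : ℕ) (p : Fin n → ℝ), p ∈ Set.Icc 0 1 ∧ f = C (f.eval 1) * poly p univ := by
  set L := f.roots.toList
  have hL : ∀ i : Fin L.length, L[i] ≤ 0 := fun i =>
    hroots _ (Multiset.mem_toList.1 (List.getElem_mem _))
  set p : Fin L.length → ℝ := fun i => (1 - L[i])⁻¹
  obtain ⟨c, hc⟩ : ∃ c, f = C c * poly p univ := by
    refine ⟨f.leadingCoeff * ∏ i : Fin L.length, (1 - L[i]), ?_⟩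
    conv_lhs => rw [hf.eq_prod_roots, ← Multiset.coe_toList f.roots, Multiset.map_coe,
      Multiset.prod_coe, ← Fin.prod_univ_fun_getElem]
    rw [C_mul, map_prod, mul_assoc, poly, ← prod_mul_distrib]
    congr 1
    exact prod_congr rfl fun i _ => X_sub_C_eq_C_mul_linear ((hL i).trans_lt one_pos).ne
  have hc1 : f.eval 1 = c := by rw [hc, eval_mul, eval_C, eval_one_poly, mul_one]
  refine ⟨L.length, p, ⟨fun i => ?_, fun i => ?_⟩, hc1 ▸ hc⟩
  · exact inv_nonneg.2 (by linarith [hL i])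
  · exact inv_le_one_of_one_le₀ (by linarith [hL i])

variable [DecidableEq ι]

theorem poly_insert (p : ι → ℝ) {s : Finset ι} {i : ι} (hi : i ∉ s) :
    poly p (insert i s) = (C (p i) * X + C (1 - p i)) * poly p s :=
  prod_insert hi

theorem derivative_poly_eval_one (p : ι → ℝ) (s : Finset ι) :
    (derivative (poly p s)).eval 1 = ∑ i ∈ s, p i := by
  induction s using Finset.induction_on with
  | empty => simp [poly]
  | insert i s hi ih =>
    rw [poly_insert p hi, derivative_mul, sum_insert hi]
    simp [ih, eval_one_poly]

theorem reflect_poly (p : ι → ℝ) (s : Finset ι) :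
    reflect s.card (poly p s) = poly (1 - p) s := by
  induction s using Finset.induction_on with
  | empty => simp [poly]
  | insert i s hi ih =>
    rw [poly_insert _ hi, poly_insert _ hi, card_insert_of_notMem hi, add_comm,
      reflect_mul _ _ natDegree_linear_le (natDegree_poly_le p s), reflect_one_linear, ih]
    simp

theorem continuous_coeff_poly (s : Finset ι) (k : ℕ) :
    Continuous fun p : ι → ℝ => (poly p s).coeff k := by
  induction s using Finset.induction_on generalizing k with
  | empty => exact continuous_const
  | insert i s hi ih =>
    simp_rw [poly_insert _ hi]
    cases k with
    | zero => simp_rw [coeff_linear_mul_zero]; fun_prop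
    | succ k => simp_rw [coeff_linear_mul_succ]; fun_prop

theorem exists_coeffGap_update_update_eq (σ : ι → ℝ) {s : Finset ι} {i j : ι} (hi : i ∈ s)
    (hj : j ∈ s) (hij : i ≠ j) (k : ℕ) :
    ∃ A B D : ℝ, ∀ a b : ℝ,
      coeffGap (Function.update (Function.update σ i a) j b) s k = A + (a + b) * B + a * b * D := by
  set t := (s.erase j).erase i
  set Q := poly σ t
  set E : ℝ[X] → ℝ := fun P => P.coeff (k + 1) - P.coeff k
  refine ⟨E Q, E ((X - 1) * Q), E ((X - 1) ^ 2 * Q), fun a b => ?_⟩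
  have hi' : i ∈ s.erase j := mem_erase.2 ⟨hij, hi⟩
  have hQ : poly (Function.update (Function.update σ i a) j b) t = Q :=
    poly_congr fun x hx => by
      rw [Function.update_of_ne (ne_of_mem_erase (mem_of_mem_erase hx)),
        Function.update_of_ne (ne_of_mem_erase hx)]
  have hsplit : poly (Function.update (Function.update σ i a) j b) s =
      Q + C (a + b) * ((X - 1) * Q) + C (a * b) * ((X - 1) ^ 2 * Q) := by
    rw [poly, ← mul_prod_erase s _ hj, ← mul_prod_erase _ _ hi', ← poly, hQ]
    simp only [Function.update_self, Function.update_of_ne hij, map_add, map_mul, map_sub, map_one]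
    ring
  simp only [coeffGap, hsplit, E, coeff_add, coeff_C_mul]
  ring

theorem update_update_mem_meanAtMost {s : Finset ι} {k : ℝ} {σ : ι → ℝ} (hσ : σ ∈ meanAtMost s k)
    {i j : ι} (hi : i ∈ s) (hj : j ∈ s) (hij : i ≠ j) {a b : ℝ} (ha : a ∈ Set.Icc 0 1)
    (hb : b ∈ Set.Icc 0 1) (hab : a + b = σ i + σ j) :
    Function.update (Function.update σ i a) j b ∈ meanAtMost s k := by
  refine ⟨⟨fun x => ?_, fun x => ?_⟩, ?_⟩
  · simp only [Function.update_apply]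
    split_ifs
    exacts [hb.1, ha.1, hσ.1.1 x]
  · simp only [Function.update_apply]
    split_ifs
    exacts [hb.2, ha.2, hσ.1.2 x]
  · show ∑ x ∈ s, Function.update (Function.update σ i a) j b x ≤ k
    rw [sum_update_eq hj, sum_update_eq hi, Function.update_of_ne hij.symm]
    have : ∑ x ∈ s, σ x ≤ k := hσ.2
    linarith

/-- Along `a + b = σ i + σ j` the gap is an affine function of `a * b`; maximality against the
midpoint makes its slope `D` nonpositive, so the extreme pair of `exists_add_eq_mul_le` does no
worse. -/
theorem exists_apply_eq_zero_or_one_of_isMaxOn {s : Finset ι} {k : ℕ} {σ : ι → ℝ}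
    (hσ : σ ∈ meanAtMost s k) (hmax : IsMaxOn (coeffGap · s k) (meanAtMost s k) σ)
    {i j : ι} (hi : i ∈ s) (hj : j ∈ s) (hne : σ i ≠ σ j) :
    ∃ τ ∈ meanAtMost s k, ∃ l ∈ s, (τ l = 0 ∨ τ l = 1) ∧ coeffGap σ s k ≤ coeffGap τ s k := by
  have hij : i ≠ j := fun h => hne (h ▸ rfl)
  have h0 : ∀ x, 0 ≤ σ x := hσ.1.1
  have h1 : ∀ x, σ x ≤ 1 := hσ.1.2
  obtain ⟨A, B, D, hgap⟩ := exists_coeffGap_update_update_eq σ hi hj hij k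
  have hgapσ : coeffGap σ s k = A + (σ i + σ j) * B + σ i * σ j * D := by
    rw [← hgap]; simp
  have hD : D ≤ 0 := by
    have hm : (σ i + σ j) / 2 ∈ Set.Icc (0 : ℝ) 1 :=
      ⟨by linarith [h0 i, h0 j], by linarith [h1 i, h1 j]⟩
    have hle := isMaxOn_iff.1 hmax _
      (update_update_mem_meanAtMost hσ hi hj hij hm hm (by ring))
    rw [hgapσ, hgap] at hle
    nlinarith [sq_pos_of_ne_zero (sub_ne_zero.2 hne)]
  obtain ⟨a, b, hab, ha, hb, hext, hmul⟩ := exists_add_eq_mul_le ⟨h0 i, h1 i⟩ ⟨h0 j, h1 j⟩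
  refine ⟨_, update_update_mem_meanAtMost hσ hi hj hij ha hb hab, ?_⟩
  have hle : coeffGap σ s k ≤ coeffGap (Function.update (Function.update σ i a) j b) s k := by
    rw [hgapσ, hgap, hab]; nlinarith
  rcases hext with rfl | rfl
  · exact ⟨i, hi, Or.inr (by simp [Function.update_of_ne hij]), hle⟩
  · exact ⟨j, hj, Or.inl (by simp), hle⟩

theorem coeff_succ_le_of_apply_eq_zero_or_one {s : Finset ι} {i : ι} (hi : i ∈ s) {σ : ι → ℝ}
    (hσ : 0 ≤ σ) (hσi : σ i = 0 ∨ σ i = 1) {k : ℕ} (hsum : ∑ j ∈ s, σ j ≤ k)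
    (ih : ∀ k : ℕ, ∑ j ∈ s.erase i, σ j ≤ k →
      (poly σ (s.erase i)).coeff (k + 1) ≤ (poly σ (s.erase i)).coeff k) :
    (poly σ s).coeff (k + 1) ≤ (poly σ s).coeff k := by
  rw [← add_sum_erase s σ hi] at hsum
  have herase : 0 ≤ ∑ j ∈ s.erase i, σ j := sum_nonneg fun j _ => hσ j
  rw [poly, ← mul_prod_erase s _ hi, ← poly]
  rcases hσi with h0 | h1
  · simpa [h0] using ih k (by linarith)
  · obtain ⟨k, rfl⟩ : ∃ k', k = k' + 1 :=
      Nat.exists_eq_succ_of_ne_zero (by rintro rfl; norm_num at hsum; linarith)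
    simpa [h1, coeff_X_mul] using ih k (by push_cast at hsum; linarith)

theorem coeff_succ_le_of_sum_le {s : Finset ι} {k : ℕ} {p : ι → ℝ} (hp : p ∈ Set.Icc 0 1)
    (hsum : ∑ i ∈ s, p i ≤ k) : (poly p s).coeff (k + 1) ≤ (poly p s).coeff k := by
  induction s using Finset.strongInduction generalizing k p with
  | H s ih =>
    have hK : IsCompact (meanAtMost s k) :=
      isCompact_Icc.inter_right (isClosed_le (by fun_prop) continuous_const)
    have hg : Continuous (coeffGap · s k) :=
      (continuous_coeff_poly s _).sub (continuous_coeff_poly s _)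
    obtain ⟨σ, hσ, hmax⟩ := hK.exists_isMaxOn ⟨p, hp, hsum⟩ hg.continuousOn
    suffices coeffGap σ s k ≤ 0 from sub_nonpos.1 ((isMaxOn_iff.1 hmax p ⟨hp, hsum⟩).trans this)
    by_cases hpair : ∃ i ∈ s, ∃ j ∈ s, σ i ≠ σ j
    · obtain ⟨i, hi, j, hj, hne⟩ := hpair
      obtain ⟨τ, hτ, l, hl, hτl, hστ⟩ := exists_apply_eq_zero_or_one_of_isMaxOn hσ hmax hi hj hne
      exact hστ.trans <| sub_nonpos.2 <| coeff_succ_le_of_apply_eq_zero_or_one hl hτ.1.1 hτl hτ.2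
        fun _ => ih _ (erase_ssubset hl) hτ.1
    · push Not at hpair
      obtain ⟨x, hx, hσx⟩ : ∃ x ∈ Set.Icc (0 : ℝ) 1, ∀ i ∈ s, σ i = x := by
        rcases s.eq_empty_or_nonempty with rfl | ⟨i₀, hi₀⟩
        · exact ⟨0, ⟨le_rfl, zero_le_one⟩, by simp⟩
        · exact ⟨σ i₀, ⟨hσ.1.1 i₀, hσ.1.2 i₀⟩, fun i hi => hpair i hi i₀ hi₀⟩
      have hmean : (s.card : ℝ) * x ≤ k := by
        simpa [sum_congr rfl hσx] using hσ.2
      simpa only [coeffGap, poly_eq_pow hσx, sub_nonpos] using binomial_coeff_succ_le hx hmean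

theorem coeff_le_coeff_succ_of_le_sum {s : Finset ι} {k : ℕ} {p : ι → ℝ}
    (hp : p ∈ Set.Icc 0 1) (hsum : k + 1 ≤ ∑ i ∈ s, p i) :
    (poly p s).coeff k ≤ (poly p s).coeff (k + 1) := by
  have hks : k + 1 ≤ s.card := by
    have : ∑ i ∈ s, p i ≤ s.card := by simpa using sum_le_sum fun i _ => hp.2 i
    exact_mod_cast hsum.trans this
  have hq : 1 - p ∈ Set.Icc 0 1 := ⟨sub_nonneg.2 hp.2, sub_le_self _ hp.1⟩
  have h := coeff_succ_le_of_sum_le (s := s) (k := s.card - (k + 1)) hq (by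
    simp only [Pi.sub_apply, Pi.one_apply, sum_sub_distrib, sum_const, nsmul_one]
    push_cast [Nat.cast_sub hks]
    linarith)
  rwa [← reflect_poly, coeff_reflect, coeff_reflect, revAt_le (by omega), revAt_le (by omega),
    show s.card - (s.card - (k + 1) + 1) = k by omega,
    show s.card - (s.card - (k + 1)) = k + 1 by omega] at h

end PoissonBinomial

open PoissonBinomial

theorem exists_mode_eq_floor_or_ceil {α : Type*} [LinearOrder α] {a : ℕ → α} {μ : ℝ}
    (hμ : 0 ≤ μ) (hup : ∀ k : ℕ, k + 1 ≤ μ → a k ≤ a (k + 1))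
    (hdown : ∀ k : ℕ, μ ≤ k → a (k + 1) ≤ a k) :
    ∃ k : ℕ, (k = ⌊μ⌋₊ ∨ k = ⌈μ⌉₊) ∧ (∀ i, i < k → a i ≤ a (i + 1)) ∧
      (∀ i, k ≤ i → a (i + 1) ≤ a i) := by
  set m := ⌊μ⌋₊
  have hbelow : ∀ i, i < m → a i ≤ a (i + 1) := fun i hi => hup i <| by
    have : ((i + 1 : ℕ) : ℝ) ≤ m := by exact_mod_cast hi
    push_cast at this
    linarith [Nat.floor_le hμ]
  have habove : ∀ i, m + 1 ≤ i → a (i + 1) ≤ a i := fun i hi =>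
    hdown i ((Nat.lt_floor_add_one μ).le.trans (by exact_mod_cast hi))
  by_cases hm : a (m + 1) ≤ a m
  · refine ⟨m, Or.inl rfl, hbelow, fun i hi => ?_⟩
    rcases hi.eq_or_lt with rfl | hi
    exacts [hm, habove i hi]
  · have hμm : (m : ℝ) < μ := lt_of_not_ge fun h => hm (hdown m h)
    have hceil : ⌈μ⌉₊ = m + 1 := le_antisymm (Nat.ceil_le_floor_add_one μ) (Nat.lt_ceil.2 hμm)
    refine ⟨m + 1, Or.inr hceil.symm, fun i hi => ?_, habove⟩
    rcases Nat.lt_succ_iff_lt_or_eq.1 hi with hi | rfl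
    exacts [hbelow i hi, (not_le.1 hm).le]

/-- If a polynomial `f` with positive coefficients has all real roots, then its
coefficient sequence is unimodal with mode at `⌊f'(1)/f(1)⌋` or `⌈f'(1)/f(1)⌉`. -/
theorem stmt_19 (f : Polynomial ℝ)
    (hpos : ∀ i ≤ f.natDegree, 0 < f.coeff i)
    (hroots : (f.map (RingHom.id ℝ)).Splits) :
    ∃ k : ℕ,
      (k = ⌊(f.derivative.eval 1) / (f.eval 1)⌋₊ ∨
        k = ⌈(f.derivative.eval 1) / (f.eval 1)⌉₊) ∧
      (∀ i, i < k → f.coeff i ≤ f.coeff (i + 1)) ∧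
      (∀ i, k ≤ i → f.coeff (i + 1) ≤ f.coeff i) := by
  have hnonneg : ∀ i, 0 ≤ f.coeff i := fun i => (le_or_gt i f.natDegree).elim
    (fun h => (hpos i h).le) fun h => (coeff_eq_zero_of_natDegree_lt h).ge
  have heval : ∀ x : ℝ, 0 ≤ x → 0 < f.eval x := fun x =>
    eval_pos_of_coeff_nonneg hnonneg (hpos 0 (Nat.zero_le _))
  obtain ⟨n, p, hp, hfp⟩ := exists_eq_C_eval_one_mul_poly (by simpa using hroots)
    fun r hr => le_of_not_gt fun h => (heval r h.le).ne' (isRoot_of_mem_roots hr)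
  set c := f.eval 1
  have hc0 : 0 < c := heval 1 zero_le_one
  have hcoeff : ∀ k, f.coeff k = c * (poly p univ).coeff k := fun k => by
    rw [hfp, coeff_C_mul]
  have hmean : f.derivative.eval 1 / c = ∑ i, p i := by
    rw [div_eq_iff hc0.ne', hfp, derivative_C_mul, eval_mul, eval_C, derivative_poly_eval_one,
      mul_comm]
  rw [hmean]
  refine exists_mode_eq_floor_or_ceil (sum_nonneg fun i _ => hp.1 i) (fun k hk => ?_) fun k hk => ?_
  · rw [hcoeff, hcoeff]
    exact mul_le_mul_of_nonneg_left (coeff_le_coeff_succ_of_le_sum hp hk) hc0.le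
  · rw [hcoeff, hcoeff]
    exact mul_le_mul_of_nonneg_left (coeff_succ_le_of_sum_le hp hk) hc0.le
end
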